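/- Let n ≥ 3, D = diag(I₁, …, Iₙ) real diagonal with distinct positive entries I₁ < … < Iₙ, S orthogonal, C = S D S⁻¹, and Ω^{rs} = S(1_{rs} − 1_{sr})S⁻¹. Let β(X,Y) = I_C⁻¹[C, XY + YX] on so(n), where I_C(X) = XC + CX. Set G¹ = Ω^{12} and G² = Ω^{23} + Ω^{34} + … + Ω^{n−1,n}. Then the smallest linear subspace V of so(n) that contains G¹ and G² and is closed under β (i.e., X, Y ∈ V implies β(X,Y) ∈ V) is all of so(n): iterated applications of β to G¹, G² generate a basis of so(n). -/

import Mathlib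

open Matrix

/-- Square real matrices of size `n`. -/
abbrev Mat (n : ℕ) := Matrix (Fin n) (Fin n) ℝ

/-- The inertia operator `I_C(X) = XC + CX` of the multidimensional rigid body. -/
def IC {n : ℕ} (C X : Mat n) : Mat n := X * C + C * X

/-- Matrix commutator `[A, B] = AB - BA`. -/
def mbracket {n : ℕ} (A B : Mat n) : Mat n := A * B - B * A

/-- A matrix is skew-symmetric, i.e. belongs to `so(n)`. -/
def IsSkew {n : ℕ} (X : Mat n) : Prop := Xᵀ = -X

/-- The principal axis `Ω^{rs} = S Θ^{rs} S⁻¹` with `Θ^{rs} = 1_{rs} − 1_{sr}`.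
Indices are `0`-based: `Om S i j` corresponds to `Ω^{i+1, j+1}` of the paper. -/
noncomputable def Om {n : ℕ} (S : Mat n) (r s : Fin n) : Mat n :=
  S * (Matrix.single r s 1 - Matrix.single s r 1) * S⁻¹

/-!
Conjugation by the orthogonal matrix `S` is a ⋆-algebra automorphism, so it suffices to treat
the principal frame `C = D = diag(I₁, …, Iₙ)`, where `G¹ = Θ^{12}` and
`G² = Θ^{23} + ⋯ + Θ^{n-1,n}`. There `I_D` and `[D, ·]` act entrywise by `Iᵢ + Iⱼ` and
`Iᵢ - Iⱼ`, so `β(X, Y)` is the entrywise product of `XY + YX` with `(Iᵢ - Iⱼ) / (Iᵢ + Iⱼ)`,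
which sends `Ψ^{rt} = 1_{rt} + 1_{tr}` to a nonzero multiple of `Θ^{rt}`.
Since `Θ^{1m} G² + G² Θ^{1m} = Ψ^{1,m+1} - Ψ^{1,m-1}` (without the last term for `m = 2`),
`β(Θ^{1m}, G²)` climbs from `Θ^{12} = G¹` to `Θ^{13}, …, Θ^{1n}`, and then
`Θ^{r1} Θ^{1t} + Θ^{1t} Θ^{r1} = Ψ^{rt}` yields every `Θ^{rt}`, a spanning family of `so(n)`.
-/

namespace RigidBody

variable {n : ℕ}

noncomputable def Θ (r s : Fin n) : Mat n := single r s 1 - single s r 1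

noncomputable def Ψ (r s : Fin n) : Mat n := single r s 1 + single s r 1

lemma Θ_self (r : Fin n) : Θ r r = 0 := sub_self _

lemma Θ_swap (r s : Fin n) : Θ s r = -Θ r s := (neg_sub _ _).symm

lemma anticomm_Θ_Θ {p m a b : Fin n} (ha : a ≠ p) (hb : b ≠ p) :
    Θ p m * Θ a b + Θ a b * Θ p m =
      (if m = a then Ψ p b else 0) - if m = b then Ψ p a else 0 := by
  rcases eq_or_ne m a with rfl | hma
  · rcases eq_or_ne m b with rfl | hmb
    · simp [Θ]
    · simp [Θ, Ψ, hmb, sub_mul, mul_sub, single_mul_single_same, single_mul_single_of_ne,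
        ha, hb, ha.symm, hb.symm, hmb.symm]
  · rcases eq_or_ne m b with rfl | hmb
    · simp [Θ, Ψ, hma, sub_mul, mul_sub, single_mul_single_same, single_mul_single_of_ne,
        ha, hb, ha.symm, hb.symm, hma.symm]
      abel
    · simp [Θ, hma, hmb, sub_mul, mul_sub, single_mul_single_of_ne, ha, hb, ha.symm, hb.symm,
        hma.symm, hmb.symm]

noncomputable def thetaPath (n : ℕ) : Mat n :=
  ∑ j : Fin (n - 2), Θ ⟨j + 1, by omega⟩ ⟨j + 2, by omega⟩

lemma anticomm_Θ_thetaPath {m : ℕ} (hm : m + 2 < n) :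
    Θ ⟨0, by omega⟩ ⟨m + 1, by omega⟩ * thetaPath n +
        thetaPath n * Θ ⟨0, by omega⟩ ⟨m + 1, by omega⟩ =
      Ψ ⟨0, by omega⟩ ⟨m + 2, hm⟩ - if m = 0 then 0 else Ψ ⟨0, by omega⟩ ⟨m, by omega⟩ := by
  rw [thetaPath, Finset.mul_sum, Finset.sum_mul, ← Finset.sum_add_distrib,
    Finset.sum_congr rfl fun j _ =>
      anticomm_Θ_Θ (Fin.ne_of_val_ne (by simp)) (Fin.ne_of_val_ne (by simp)),
    Finset.sum_sub_distrib]
  congr 1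
  · rw [Finset.sum_eq_single ⟨m, by omega⟩]
    · simp
    · intro j _ hj
      rw [if_neg]
      simp only [Fin.ext_iff, ne_eq] at hj ⊢
      omega
    · simp
  · rcases m with _ | k
    · simp
    · rw [if_neg (by omega), Finset.sum_eq_single ⟨k, by omega⟩]
      · simp
      · intro j _ hj
        rw [if_neg]
        simp only [Fin.ext_iff, ne_eq] at hj ⊢
        omega
      · simp

lemma mem_of_forall_Θ_mem {W : Submodule ℝ (Mat n)} (h : ∀ r t, Θ r t ∈ W) {Z : Mat n}
    (hZ : IsSkew Z) : Z ∈ W := by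
  have hZ' : ∀ i j, Z j i = -Z i j := fun i j => by rw [← transpose_apply Z, hZ, neg_apply]
  have hZsum : Z = ∑ r, ∑ t, (Z r t / 2) • Θ r t := by
    ext i j
    simp only [Θ, Matrix.sum_apply, Matrix.smul_apply, Matrix.sub_apply, single_apply, ite_and,
      smul_eq_mul, mul_sub, mul_ite, mul_one, mul_zero, Finset.sum_sub_distrib,
      Finset.sum_ite_irrel, Finset.sum_ite_eq', Finset.mem_univ, if_true, Finset.sum_const_zero]
    rw [hZ']
    ring
  rw [hZsum]
  exact Submodule.sum_mem _ fun r _ => Submodule.sum_mem _ fun t _ => W.smul_mem _ (h r t)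

noncomputable def betaDiag (Iv : Fin n → ℝ) : Mat n →ₗ[ℝ] Mat n where
  toFun A := of fun i j => (Iv i - Iv j) / (Iv i + Iv j) * A i j
  map_add' A B := by ext; simp [mul_add]
  map_smul' c A := by
    ext
    simp only [Matrix.smul_apply, smul_eq_mul, of_apply, RingHom.id_apply]
    ring

@[simp]
lemma betaDiag_apply (Iv : Fin n → ℝ) (A : Mat n) (i j : Fin n) :
    betaDiag Iv A i j = (Iv i - Iv j) / (Iv i + Iv j) * A i j := rfl

lemma isSkew_betaDiag (Iv : Fin n → ℝ) {A : Mat n} (hA : Aᵀ = A) : IsSkew (betaDiag Iv A) := by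
  ext i j
  have hAij : A i j = A j i := by rw [← transpose_apply A j i, hA]
  rw [transpose_apply, neg_apply, betaDiag_apply, betaDiag_apply, hAij, add_comm (Iv j)]
  ring

lemma betaDiag_single (Iv : Fin n → ℝ) (r t : Fin n) :
    betaDiag Iv (single r t 1) = ((Iv r - Iv t) / (Iv r + Iv t)) • single r t 1 := by
  ext i j
  by_cases h : r = i ∧ t = j
  · obtain ⟨rfl, rfl⟩ := h
    simp
  · simp [h]

lemma betaDiag_Ψ (Iv : Fin n → ℝ) (r t : Fin n) :
    betaDiag Iv (Ψ r t) = ((Iv r - Iv t) / (Iv r + Iv t)) • Θ r t := by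
  rw [Ψ, map_add, betaDiag_single, betaDiag_single, Θ]
  module

lemma IC_diagonal_apply (Iv : Fin n → ℝ) (B : Mat n) (i j : Fin n) :
    IC (diagonal Iv) B i j = (Iv i + Iv j) * B i j := by
  simp only [IC, Matrix.add_apply, mul_diagonal, diagonal_mul]
  ring

lemma mbracket_diagonal_apply (Iv : Fin n → ℝ) (A : Mat n) (i j : Fin n) :
    mbracket (diagonal Iv) A i j = (Iv i - Iv j) * A i j := by
  simp only [mbracket, Matrix.sub_apply, mul_diagonal, diagonal_mul]
  ring

lemma IC_diagonal_betaDiag {Iv : Fin n → ℝ} (hsum : ∀ i j, Iv i + Iv j ≠ 0) (A : Mat n) :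
    IC (diagonal Iv) (betaDiag Iv A) = mbracket (diagonal Iv) A := by
  ext i j
  rw [IC_diagonal_apply, mbracket_diagonal_apply, betaDiag_apply, ← mul_assoc,
    mul_div_cancel₀ _ (hsum i j)]

lemma transpose_anticomm_of_isSkew {X Y : Mat n} (hX : IsSkew X) (hY : IsSkew Y) :
    (X * Y + Y * X)ᵀ = X * Y + Y * X := by
  rw [transpose_add, transpose_mul, transpose_mul, hX, hY, neg_mul_neg, neg_mul_neg, add_comm]

lemma map_IC {F : Type*} [FunLike F (Mat n) (Mat n)] [RingHomClass F (Mat n) (Mat n)] (f : F)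
    (C X : Mat n) : f (IC C X) = IC (f C) (f X) := by
  simp only [IC, map_add, map_mul]

lemma map_mbracket {F : Type*} [FunLike F (Mat n) (Mat n)] [RingHomClass F (Mat n) (Mat n)]
    (f : F) (A B : Mat n) : f (mbracket A B) = mbracket (f A) (f B) := by
  simp only [mbracket, map_sub, map_mul]

lemma isSkew_iff_star_eq_neg {X : Mat n} : IsSkew X ↔ star X = -X := by
  rw [star_eq_conjTranspose, conjTranspose_eq_transpose_of_trivial, IsSkew]

lemma isSkew_map_iff (φ : Mat n ≃⋆ₐ[ℝ] Mat n) {X : Mat n} : IsSkew (φ X) ↔ IsSkew X := by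
  rw [isSkew_iff_star_eq_neg, isSkew_iff_star_eq_neg, ← map_star, ← map_neg,
    EmbeddingLike.apply_eq_iff_eq]

def IsBetaClosed (C : Mat n) (W : Submodule ℝ (Mat n)) : Prop :=
  ∀ X ∈ W, ∀ Y ∈ W, ∀ B : Mat n, IsSkew B → IC C B = mbracket C (X * Y + Y * X) → B ∈ W

lemma IsBetaClosed.comap {C : Mat n} {V : Submodule ℝ (Mat n)} (φ : Mat n ≃⋆ₐ[ℝ] Mat n)
    (hV : IsBetaClosed (φ C) V) : IsBetaClosed C (V.comap φ.toAlgEquiv.toLinearMap) := by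
  intro X hX Y hY B hB h
  refine hV (φ X) hX (φ Y) hY (φ B) ((isSkew_map_iff φ).2 hB) ?_
  rw [← map_IC, h, map_mbracket, map_add, map_mul, map_mul]

section DiagonalFrame

variable {Iv : Fin n → ℝ} {W : Submodule ℝ (Mat n)} (hW : IsBetaClosed (diagonal Iv) W)
  (hsum : ∀ i j, Iv i + Iv j ≠ 0) (hskew : ∀ X ∈ W, IsSkew X)
include hW hsum hskew

lemma IsBetaClosed.betaDiag_anticomm_mem {X Y : Mat n} (hX : X ∈ W) (hY : Y ∈ W) :
    betaDiag Iv (X * Y + Y * X) ∈ W :=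
  hW X hX Y hY _ (isSkew_betaDiag Iv (transpose_anticomm_of_isSkew (hskew X hX) (hskew Y hY)))
    (IC_diagonal_betaDiag hsum _)

lemma IsBetaClosed.Θ_mem_of_anticomm_eq {X Y A : Mat n} {r t : Fin n} (hrt : Iv r ≠ Iv t)
    (hX : X ∈ W) (hY : Y ∈ W) (hA : betaDiag Iv A ∈ W) (h : X * Y + Y * X = Ψ r t - A) :
    Θ r t ∈ W := by
  have hc : (Iv r - Iv t) / (Iv r + Iv t) ≠ 0 := div_ne_zero (sub_ne_zero.2 hrt) (hsum r t)
  have hβ := W.add_mem (hW.betaDiag_anticomm_mem hsum hskew hX hY) hA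
  rwa [h, map_sub, sub_add_cancel, betaDiag_Ψ, W.smul_mem_iff hc] at hβ

variable (hinj : Function.Injective Iv)
include hinj

lemma IsBetaClosed.Θ_zero_mem (h1 : 1 < n) (hG1 : Θ ⟨0, by omega⟩ ⟨1, h1⟩ ∈ W)
    (hG2 : thetaPath n ∈ W) (m : ℕ) (hm : m < n) : Θ ⟨0, by omega⟩ ⟨m, hm⟩ ∈ W := by
  induction m using Nat.twoStepInduction with
  | zero => rw [Θ_self]; exact W.zero_mem
  | one => exact hG1
  | more m ih₀ ih₁ =>
    refine hW.Θ_mem_of_anticomm_eq hsum hskew (hinj.ne (by simp)) (ih₁ (by omega)) hG2 ?_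
      (anticomm_Θ_thetaPath hm)
    split_ifs
    · rw [map_zero]; exact W.zero_mem
    · rw [betaDiag_Ψ]; exact W.smul_mem _ (ih₀ (by omega))

lemma IsBetaClosed.Θ_mem_of_pivot {p : Fin n} (hp : ∀ t, Θ p t ∈ W) (r t : Fin n) :
    Θ r t ∈ W := by
  have hp' : ∀ r, Θ r p ∈ W := fun r => by rw [Θ_swap]; exact W.neg_mem (hp r)
  rcases eq_or_ne r p with rfl | hrp
  · exact hp t
  rcases eq_or_ne t p with rfl | htp
  · exact hp' r
  rcases eq_or_ne r t with rfl | hrt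
  · rw [Θ_self]; exact W.zero_mem
  refine hW.Θ_mem_of_anticomm_eq hsum hskew (hinj.ne hrt) (hp' r) (hp t) (A := 0) (by simp) ?_
  rw [anticomm_Θ_Θ hrp.symm hrt.symm]
  simp [htp.symm]

theorem IsBetaClosed.isSkew_mem (h1 : 1 < n) (hG1 : Θ ⟨0, by omega⟩ ⟨1, h1⟩ ∈ W)
    (hG2 : thetaPath n ∈ W) {Z : Mat n} (hZ : IsSkew Z) : Z ∈ W :=
  mem_of_forall_Θ_mem (hW.Θ_mem_of_pivot hsum hskew hinj (p := ⟨0, by omega⟩)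
    fun t => hW.Θ_zero_mem hsum hskew hinj h1 hG1 hG2 t t.2) hZ

end DiagonalFrame

end RigidBody

open RigidBody in
/-- **Saturation.** With `C = S·diag(I₁,…,Iₙ)·S⁻¹` (`0 < I₁ < … < Iₙ`, `S` orthogonal),
`G¹ = Ω^{12}` and `G² = Ω^{23} + … + Ω^{n−1,n}`, the smallest linear subspace of `so(n)`
containing `G¹, G²` and closed under `β(X,Y) = I_C⁻¹[C, XY + YX]` (encoded: it contains
every `B ∈ so(n)` with `I_C(B) = [C, XY + YX]` for `X, Y` in the subspace) is all of
`so(n)`: any such subspace contains every skew-symmetric matrix. -/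
theorem beta_iterations_saturate_so_n
    (n : ℕ) (hn : 3 ≤ n) (Iv : Fin n → ℝ) (hpos : ∀ i, 0 < Iv i)
    (hmono : StrictMono Iv) (S : Mat n) (hS : Sᵀ * S = 1) :
    ∀ V : Submodule ℝ (Mat n),
      (∀ X ∈ V, IsSkew X) →
      Om S ⟨0, by omega⟩ ⟨1, by omega⟩ ∈ V →
      (∑ j : Fin (n - 2),
        Om S ⟨j.1 + 1, by have := j.2; omega⟩ ⟨j.1 + 2, by have := j.2; omega⟩) ∈ V →
      (∀ X ∈ V, ∀ Y ∈ V, ∀ B : Mat n, IsSkew B →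
        IC (S * diagonal Iv * S⁻¹) B = mbracket (S * diagonal Iv * S⁻¹) (X * Y + Y * X) →
        B ∈ V) →
      ∀ Z : Mat n, IsSkew Z → Z ∈ V := by
  intro V hskew hG1 hG2 hV Z hZ
  have hSt : star S = Sᵀ := by rw [star_eq_conjTranspose, conjTranspose_eq_transpose_of_trivial]
  have hSu : S ∈ unitary (Mat n) := by rw [mem_unitaryGroup_iff', hSt, hS]
  let φ := Unitary.conjStarAlgAut ℝ (Mat n) ⟨S, hSu⟩
  have hφ (M : Mat n) : S * M * S⁻¹ = φ M := by rw [inv_eq_left_inv hS, ← hSt]; rfl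
  have hOm (r s : Fin n) : Om S r s = φ (Θ r s) := hφ _
  let W := V.comap φ.toAlgEquiv.toLinearMap
  have hW : IsBetaClosed (diagonal Iv) W := IsBetaClosed.comap φ (by rwa [← hφ])
  have hWskew : ∀ X ∈ W, IsSkew X := fun X hX => (isSkew_map_iff φ).1 (hskew _ hX)
  have hG1W : Θ ⟨0, by omega⟩ ⟨1, by omega⟩ ∈ W := by
    show φ _ ∈ V
    rwa [← hOm]
  have hG2W : thetaPath n ∈ W := by
    show φ _ ∈ V
    simpa only [thetaPath, map_sum, hOm] using hG2
  have hZW : φ.symm Z ∈ W := hW.isSkew_mem (fun i j => (add_pos (hpos i) (hpos j)).ne') hWskew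
    hmono.injective (by omega) hG1W hG2W ((isSkew_map_iff φ).1 (by simpa using hZ))
  simpa [W] using hZW
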